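/- For a graph Γ on n vertices, λ_max(Q(Γ)) ≥ n^{−1/3}·(4·∑_{j=1}^n d_j³ + 8·∑_{e_{ij}∈E} d_i d_j)^{1/3}, where the second sum runs over edges of Γ. -/

import Mathlib

open Matrix BigOperators

noncomputable section

/-- 0/1 adjacency matrix of a simple graph. -/
def adjMatU (n : ℕ) (G : SimpleGraph (Fin n)) [DecidableRel G.Adj] :
    Matrix (Fin n) (Fin n) ℝ :=
  fun i j => if G.Adj i j then 1 else 0

/-- Laplacian L(Γ) = D - A. -/
def lapMatU (n : ℕ) (G : SimpleGraph (Fin n)) [DecidableRel G.Adj] :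
    Matrix (Fin n) (Fin n) ℝ :=
  Matrix.diagonal (fun i => (G.degree i : ℝ)) - adjMatU n G

/-- Signless Laplacian Q(Γ) = D + A. -/
def signlessLap (n : ℕ) (G : SimpleGraph (Fin n)) [DecidableRel G.Adj] :
    Matrix (Fin n) (Fin n) ℝ :=
  Matrix.diagonal (fun i => (G.degree i : ℝ)) + adjMatU n G

/-- Sum of `f i j` over the edges of the graph (each unordered edge counted once). -/
def edgeSumU (n : ℕ) (G : SimpleGraph (Fin n)) [DecidableRel G.Adj]
    (f : Fin n → Fin n → ℝ) : ℝ :=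
  (∑ i, ∑ j, if G.Adj i j then f i j else 0) / 2

section Aux

variable (n : ℕ) (G : SimpleGraph (Fin n)) [DecidableRel G.Adj]

lemma deg_row (i : Fin n) : ∑ j, (if G.Adj i j then (1:ℝ) else 0) = (G.degree i : ℝ) := by
  rw [Finset.sum_boole]
  norm_cast
  rw [← SimpleGraph.neighborFinset_eq_filter]
  rfl

lemma Q_mulVec_one : signlessLap n G *ᵥ (fun _ => (1:ℝ)) = fun i => 2 * (G.degree i : ℝ) := by
  funext i
  simp only [signlessLap, adjMatU, mulVec, dotProduct, Matrix.add_apply, Matrix.diagonal_apply,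
    mul_one, Finset.sum_add_distrib, Finset.sum_ite_eq, Finset.mem_univ, if_true]
  rw [deg_row n G i]
  ring

lemma Q_symm : (signlessLap n G)ᵀ = signlessLap n G := by
  ext i j
  by_cases h : i = j
  · subst h; rfl
  · simp only [signlessLap, adjMatU, transpose_apply, Matrix.add_apply,
      Matrix.diagonal_apply_ne _ h, Matrix.diagonal_apply_ne _ (Ne.symm h), G.adj_comm j i]

lemma quad_eq :
    (fun _ => (1:ℝ)) ⬝ᵥ ((signlessLap n G * signlessLap n G * signlessLap n G) *ᵥ (fun _ => (1:ℝ)))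
      = 4 * ∑ j, (G.degree j : ℝ) ^ 3 +
        8 * edgeSumU n G (fun i j => (G.degree i : ℝ) * (G.degree j : ℝ)) := by
  have hsym : ∀ x y : Fin n → ℝ,
      x ⬝ᵥ (signlessLap n G *ᵥ y) = (signlessLap n G *ᵥ x) ⬝ᵥ y := by
    intro x y
    rw [dotProduct_mulVec, ← vecMul_transpose, Q_symm]
  set u : Fin n → ℝ := fun i => 2 * (G.degree i : ℝ) with hu
  have h1 : signlessLap n G *ᵥ (fun _ => (1:ℝ)) = u := Q_mulVec_one n G
  have key : (fun _ => (1:ℝ)) ⬝ᵥ ((signlessLap n G * signlessLap n G * signlessLap n G)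
      *ᵥ (fun _ => (1:ℝ))) = u ⬝ᵥ (signlessLap n G *ᵥ u) := by
    rw [← mulVec_mulVec, ← mulVec_mulVec, h1, hsym, h1]
  rw [key]
  have hpt : ∀ i k, u i * (signlessLap n G i k * u k) =
      (if i = k then 4 * (G.degree i : ℝ) ^ 3 else 0) +
      (if G.Adj i k then 4 * (G.degree i : ℝ) * (G.degree k : ℝ) else 0) := by
    intro i k
    simp only [signlessLap, adjMatU, Matrix.add_apply, Matrix.diagonal_apply, hu]
    by_cases h : i = k
    · subst h
      simp [G.irrefl]
      ring
    · simp only [if_neg h]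
      split <;> ring
  have expand : u ⬝ᵥ (signlessLap n G *ᵥ u) = ∑ i, ∑ k, u i * (signlessLap n G i k * u k) := by
    simp [dotProduct, mulVec, Finset.mul_sum]
  rw [expand]
  simp only [hpt, Finset.sum_add_distrib, Finset.sum_ite_eq, Finset.mem_univ, if_true]
  rw [edgeSumU]
  have e2 : ∑ i, ∑ k, (if G.Adj i k then 4 * (G.degree i : ℝ) * (G.degree k : ℝ) else 0)
      = 4 * ∑ i, ∑ k, (if G.Adj i k then (G.degree i : ℝ) * (G.degree k : ℝ) else 0) := by
    rw [Finset.mul_sum]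
    refine Finset.sum_congr rfl fun i _ => ?_
    rw [Finset.mul_sum]
    refine Finset.sum_congr rfl fun k _ => ?_
    split <;> ring
  rw [e2, ← Finset.mul_sum]
  ring

lemma spectral_bound {m : ℕ} (Q : Matrix (Fin m) (Fin m) ℝ) (hQ : Q.IsHermitian) :
    (fun _ => (1:ℝ)) ⬝ᵥ ((Q * Q * Q) *ᵥ (fun _ => (1:ℝ)))
      ≤ (⨆ i, hQ.eigenvalues i) ^ 3 * m := by
  classical
  set V : Matrix (Fin m) (Fin m) ℝ := (hQ.eigenvectorUnitary : Matrix (Fin m) (Fin m) ℝ) with hV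
  set S : Matrix (Fin m) (Fin m) ℝ := star V with hS
  set lam : Fin m → ℝ := hQ.eigenvalues with hlam
  set D : Matrix (Fin m) (Fin m) ℝ := diagonal (RCLike.ofReal ∘ lam) with hD
  have hSV : S * V = 1 := Matrix.UnitaryGroup.star_mul_self _
  have hVS : V * S = 1 := hQ.eigenvectorUnitary.2.2
  have hsx : ∀ X : Matrix (Fin m) (Fin m) ℝ, S * (V * X) = X := by
    intro X; rw [← Matrix.mul_assoc, hSV, Matrix.one_mul]
  have h3 : Q * Q * Q = V * (D * (D * (D * S))) := by
    conv_lhs => rw [hQ.spectral_theorem]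
    simp only [Unitary.conjStarAlgAut_apply, ← hV, ← hS, ← hD, Matrix.mul_assoc]
    rw [hsx, hsx]
  have hStar : S = Vᵀ := by
    ext i j
    simp [hS, Matrix.star_eq_conjTranspose, Matrix.conjTranspose_apply]
  set j1 : Fin m → ℝ := fun _ => (1:ℝ) with hj1
  set w : Fin m → ℝ := S *ᵥ j1 with hw
  have hval : j1 ⬝ᵥ ((Q * Q * Q) *ᵥ j1) = ∑ i, lam i ^ 3 * (w i) ^ 2 := by
    have hvw : j1 ᵥ* V = w := by
      rw [hw, hStar, ← vecMul_transpose, transpose_transpose]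
    rw [h3, ← Matrix.mulVec_mulVec, dotProduct_mulVec, hvw]
    simp only [← Matrix.mulVec_mulVec, ← hw]
    simp only [dotProduct, hD, mulVec_diagonal, Function.comp_apply, RCLike.ofReal_real_eq_id,
      id_eq]
    refine Finset.sum_congr rfl fun i _ => ?_
    ring
  have hnorm : ∑ i, (w i) ^ 2 = m := by
    have h1 : ∑ i, (w i) ^ 2 = w ⬝ᵥ w := by
      simp [dotProduct, pow_two]
    rw [h1, hw, dotProduct_comm, dotProduct_mulVec, hStar, vecMul_transpose,
      Matrix.mulVec_mulVec, ← hStar, hVS, Matrix.one_mulVec]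
    simp [hj1, dotProduct]
  have hL : ∀ i, lam i ≤ ⨆ k, lam k := fun i =>
    le_ciSup (Set.Finite.bddAbove (Set.finite_range lam)) i
  calc j1 ⬝ᵥ ((Q * Q * Q) *ᵥ j1) = ∑ i, lam i ^ 3 * (w i) ^ 2 := hval
    _ ≤ ∑ i, (⨆ k, lam k) ^ 3 * (w i) ^ 2 := by
        refine Finset.sum_le_sum fun i _ => ?_
        exact mul_le_mul_of_nonneg_right
          ((Odd.strictMono_pow (⟨1, by norm_num⟩ : Odd 3)).monotone (hL i)) (sq_nonneg _)
    _ = (⨆ k, lam k) ^ 3 * m := by rw [← Finset.mul_sum, hnorm]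

end Aux

/-- λ_max(Q(Γ)) ≥ n^{-1/3} (4 ∑_j d_j³ + 8 ∑_{e_ij ∈ E} d_i d_j)^{1/3}. -/
theorem stmt17 (n : ℕ) (hn : 0 < n) (G : SimpleGraph (Fin n)) [DecidableRel G.Adj]
    (hQ : (signlessLap n G).IsHermitian) :
    (4 * ∑ j, (G.degree j : ℝ) ^ 3 +
        8 * edgeSumU n G (fun i j => (G.degree i : ℝ) * (G.degree j : ℝ)))
          ^ ((1 : ℝ) / 3) / (n : ℝ) ^ ((1 : ℝ) / 3) ≤ ⨆ i, hQ.eigenvalues i := by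
  set S : ℝ := 4 * ∑ j, (G.degree j : ℝ) ^ 3 +
      8 * edgeSumU n G (fun i j => (G.degree i : ℝ) * (G.degree j : ℝ)) with hSdef
  set L : ℝ := ⨆ i, hQ.eigenvalues i with hLdef
  have hn' : (0:ℝ) < (n:ℝ) := by exact_mod_cast hn
  have hS0 : 0 ≤ S := by
    rw [hSdef]
    have h1 : 0 ≤ ∑ j, (G.degree j : ℝ) ^ 3 :=
      Finset.sum_nonneg fun j _ => by positivity
    have h2 : 0 ≤ edgeSumU n G (fun i j => (G.degree i : ℝ) * (G.degree j : ℝ)) := by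
      rw [edgeSumU]
      refine div_nonneg (Finset.sum_nonneg fun i _ => Finset.sum_nonneg fun k _ => ?_) (by norm_num)
      split
      · positivity
      · exact le_refl 0
    linarith
  have hle : S ≤ L ^ 3 * n := by
    rw [hSdef, ← quad_eq n G]
    exact spectral_bound _ hQ
  have hcube : 0 ≤ L ^ 3 := by
    by_contra h
    push_neg at h
    have := mul_neg_of_neg_of_pos h hn'
    linarith [hS0.trans hle]
  have hL0 : 0 ≤ L := (Odd.pow_nonneg_iff (⟨1, by norm_num⟩ : Odd 3)).mp hcube
  rw [div_le_iff₀ (by positivity : (0:ℝ) < (n:ℝ) ^ ((1:ℝ)/3))]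
  calc S ^ ((1:ℝ)/3) ≤ (L ^ 3 * n) ^ ((1:ℝ)/3) :=
        Real.rpow_le_rpow hS0 hle (by norm_num)
    _ = L * (n:ℝ) ^ ((1:ℝ)/3) := by
        rw [Real.mul_rpow hcube hn'.le, ← Real.rpow_natCast L 3, ← Real.rpow_mul hL0]
        norm_num
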